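/- Let g ∈ ℚ[b,c][[t]] be a formal power series satisfying the second-order differential equation t²·g'' + (1 + 2t)·g' - (c·t² + b)·g = 0, where ' denotes the formal derivative with respect to t. Then the series G(t) = g(t)·g(-t) satisfies the third-order differential equation t⁴·G''' + 6t³·G'' - (4c·t⁴ - (6 - 4b)·t² + 1)·G' - 4t·(2c·t² + b)·G = 0. -/

import Mathlib

/-- The coefficient ring `ℚ[b,c]`. -/
abbrev Rbc : Type := MvPolynomial (Fin 2) ℚ

open PowerSeries

/-!
Write `L_ε g = t²g'' + (ε + 2t)g' - (ct² + b)g`. Substituting `t ↦ -t` turns `L_ε` into `L_{-ε}`,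
so `h(t) = g(-t)` solves `L_{-ε} h = 0`. The third-order operator applied to `g h` is then an
explicit combination, with polynomial coefficients, of `L_ε g`, `L_{-ε} h` and their derivatives.
-/

namespace PowerSeries

variable {R : Type*} [CommRing R]

theorem rescale_C (a r : R) : rescale a (C r) = C r := by
  rw [← coe_rescaleAlgHom]
  exact (rescaleAlgHom a).commutes r

theorem derivative_rescale (a : R) (f : R⟦X⟧) :
    d⁄dX R (rescale a f) = C a * rescale a (d⁄dX R f) := by
  ext n
  simp only [coeff_derivative, coeff_rescale, coeff_C_mul, pow_succ]
  ring

theorem derivative_rescale_neg_one (f : R⟦X⟧) :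
    d⁄dX R (rescale (-1) f) = -rescale (-1) (d⁄dX R f) := by
  rw [derivative_rescale, map_neg, map_one, neg_one_mul]

theorem derivative_ofNat (n : ℕ) [n.AtLeastTwo] :
    d⁄dX R (no_index (OfNat.ofNat n : R⟦X⟧)) = 0 :=
  (d⁄dX R).map_natCast n

noncomputable def secondOrderOp (b c ε : R) (g : R⟦X⟧) : R⟦X⟧ :=
  X ^ 2 * d⁄dX R (d⁄dX R g) + (C ε + 2 * X) * d⁄dX R g - (C c * X ^ 2 + C b) * g

theorem rescale_neg_one_secondOrderOp (b c ε : R) (g : R⟦X⟧) :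
    rescale (-1) (secondOrderOp b c ε g) = secondOrderOp b c (-ε) (rescale (-1) g) := by
  simp only [secondOrderOp, map_add, map_sub, map_mul, map_pow, map_ofNat, map_neg,
    rescale_neg_one_X, rescale_C, derivative_rescale_neg_one, neg_neg]
  ring

theorem derivative_secondOrderOp (b c ε : R) (g : R⟦X⟧) :
    d⁄dX R (secondOrderOp b c ε g) = X ^ 2 * d⁄dX R (d⁄dX R (d⁄dX R g))
      + (C ε + 4 * X) * d⁄dX R (d⁄dX R g) + (2 - C c * X ^ 2 - C b) * d⁄dX R g
      - 2 * C c * X * g := by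
  simp only [secondOrderOp, map_add, map_sub, Derivation.leibniz, Derivation.leibniz_pow,
    derivative_C, derivative_X, derivative_ofNat, smul_eq_mul]
  ring

theorem thirdOrder_mul_eq_zero_of_secondOrderOp_eq_zero (b c ε : R) {g h : R⟦X⟧}
    (hg : secondOrderOp b c ε g = 0) (hh : secondOrderOp b c (-ε) h = 0) :
    X ^ 4 * d⁄dX R (d⁄dX R (d⁄dX R (g * h))) + 6 * X ^ 3 * d⁄dX R (d⁄dX R (g * h))
      - (4 * C c * X ^ 4 - (6 - 4 * C b) * X ^ 2 + C ε ^ 2) * d⁄dX R (g * h)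
      - 4 * X * (2 * C c * X ^ 2 + C b) * (g * h) = 0 := by
  have hg' := (derivative_secondOrderOp b c ε g).symm
  have hh' := (derivative_secondOrderOp b c (-ε) h).symm
  rw [hg, map_zero] at hg'
  rw [hh, map_zero] at hh'
  simp only [secondOrderOp, map_neg] at hg hh hh'
  simp only [Derivation.leibniz, smul_eq_mul, map_add]
  linear_combination (X ^ 2 * h) * hg' + (X ^ 2 * g) * hh'
    + (3 * X ^ 2 * d⁄dX R h + (2 * X - C ε) * h) * hg
    + (3 * X ^ 2 * d⁄dX R g + (2 * X + C ε) * g) * hh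

end PowerSeries

theorem statement14_general
    (b c : Rbc)
    (g : PowerSeries Rbc)
    (hg : (PowerSeries.X : PowerSeries Rbc) ^ 2 * derivativeFun (derivativeFun g)
        + (1 + 2 * PowerSeries.X) * derivativeFun g
        - (PowerSeries.C c * PowerSeries.X ^ 2 + PowerSeries.C b) * g = 0)
    (G : PowerSeries Rbc)
    (hG : G = g * PowerSeries.rescale (-1 : Rbc) g) :
    (PowerSeries.X : PowerSeries Rbc) ^ 4 * derivativeFun (derivativeFun (derivativeFun G))
      + 6 * PowerSeries.X ^ 3 * derivativeFun (derivativeFun G)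
      - (4 * PowerSeries.C c * PowerSeries.X ^ 4
          - (6 - 4 * PowerSeries.C b) * PowerSeries.X ^ 2 + 1) * derivativeFun G
      - 4 * PowerSeries.X *
          (2 * PowerSeries.C c * PowerSeries.X ^ 2 + PowerSeries.C b) * G = 0 := by
  have hgSol : secondOrderOp b c 1 g = 0 := by
    rw [secondOrderOp, map_one]
    exact hg
  have hgRefl : secondOrderOp b c (-1) (rescale (-1) g) = 0 := by
    rw [← rescale_neg_one_secondOrderOp, hgSol, map_zero]
  subst hG
  have key := thirdOrder_mul_eq_zero_of_secondOrderOp_eq_zero b c 1 hgSol hgRefl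
  rw [map_one, one_pow] at key
  exact key

/-- If `g ∈ ℚ[b,c][[t]]` satisfies `t²g'' + (1+2t)g' - (ct²+b)g = 0`, then
`G(t) = g(t)·g(-t)` satisfies
`t⁴G''' + 6t³G'' - (4ct⁴ - (6-4b)t² + 1)G' - 4t(2ct²+b)G = 0`. -/
theorem statement14
    (b c : Rbc) (hb : b = MvPolynomial.X 0) (hc : c = MvPolynomial.X 1)
    (g : PowerSeries Rbc)
    (hg : (PowerSeries.X : PowerSeries Rbc) ^ 2 * derivativeFun (derivativeFun g)
        + (1 + 2 * PowerSeries.X) * derivativeFun g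
        - (PowerSeries.C c * PowerSeries.X ^ 2 + PowerSeries.C b) * g = 0)
    (G : PowerSeries Rbc)
    (hG : G = g * PowerSeries.rescale (-1 : Rbc) g) :
    (PowerSeries.X : PowerSeries Rbc) ^ 4 * derivativeFun (derivativeFun (derivativeFun G))
      + 6 * PowerSeries.X ^ 3 * derivativeFun (derivativeFun G)
      - (4 * PowerSeries.C c * PowerSeries.X ^ 4
          - (6 - 4 * PowerSeries.C b) * PowerSeries.X ^ 2 + 1) * derivativeFun G
      - 4 * PowerSeries.X *
          (2 * PowerSeries.C c * PowerSeries.X ^ 2 + PowerSeries.C b) * G = 0 :=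
  statement14_general b c g hg G hG
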